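/- arXiv:2511.01828 — 4 statements merged into one kernel-verified Lean document; each statement's English description precedes it below -/
import Mathlib

section
/- Let X be a set, let ψ : X → ℝ and let φ : X → ℝ satisfy φ(x) ≥ 0 for all x ∈ X. For λ > 0 define H(λ) := sup_{x ∈ X} (ψ(x) − λ·φ(x)). Assume that H is real-valued and bounded on (0, ∞) (there is a constant C with |H(λ)| ≤ C for all λ > 0), that H is differentiable at every λ ∈ (0, ∞), and that there exists a family (x_λ)_{λ>0} in X such that for every λ > 0 the point x_λ attains the supremum, i.e. H(λ) = ψ(x_λ) − λ·φ(x_λ), and the derivative satisfies H'(λ) = −φ(x_λ). Then for every r > 0 the strong duality identity holds: sup { ψ(x) : x ∈ X, φ(x) ≤ r } = inf_{λ > 0} ( H(λ) + λ·r ). -/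
/-- **Strong duality** (Lemma from the paper).
`X` is a nonempty set, `ψ φ : X → ℝ` with `φ ≥ 0`.
`H l = sup_{x} (ψ x - l * φ x)` for `l > 0`, encoded by domination (`hdom`) and
attainment at `xfam l` (`hatt`). `H` is bounded on `(0,∞)`, differentiable there
with `H' l = -φ (xfam l)`.  Then for every `r > 0`,
`sup { ψ x : φ x ≤ r } = inf_{l > 0} (H l + l * r)`. -/
theorem strong_duality
    {X : Type*} [Nonempty X] (ψ φ : X → ℝ) (hφ : ∀ x, 0 ≤ φ x)
    (H : ℝ → ℝ) (C : ℝ) (hbd : ∀ l : ℝ, 0 < l → |H l| ≤ C)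
    (xfam : ℝ → X)
    (hdom : ∀ l : ℝ, 0 < l → ∀ x : X, ψ x - l * φ x ≤ H l)
    (hatt : ∀ l : ℝ, 0 < l → H l = ψ (xfam l) - l * φ (xfam l))
    (hderiv : ∀ l : ℝ, 0 < l → HasDerivAt H (-(φ (xfam l))) l)
    (r : ℝ) (hr : 0 < r) :
    sSup (ψ '' {x : X | φ x ≤ r})
      = sInf ((fun l : ℝ => H l + l * r) '' Set.Ioi 0) := by
  set G : ℝ → ℝ := fun l => H l + l * r with hG
  set S : Set ℝ := ψ '' {x : X | φ x ≤ r} with hS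
  set m : ℝ := sInf (G '' Set.Ioi 0) with hm
  have hGval : ∀ l : ℝ, G l = H l + l * r := fun l => rfl
  have hGder : ∀ l : ℝ, 0 < l → HasDerivAt G (-(φ (xfam l)) + r) l := by
    intro l hl
    exact (hderiv l hl).add (hasDerivAt_mul_const r)
  have hlow : ∀ b ∈ G '' Set.Ioi 0, -C ≤ b := by
    rintro b ⟨t, ht, rfl⟩
    have h1 : -C ≤ H t := (abs_le.1 (hbd t ht)).1
    rw [hGval]
    nlinarith [mul_pos (Set.mem_Ioi.1 ht) hr]
  -- key existence lemma
  have key : ∀ δ : ℝ, 0 < δ → ∃ x : X, φ x ≤ r ∧ m - δ ≤ ψ x := by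
    intro δ hδ
    set a : ℝ := δ / r with ha
    have ha0 : 0 < a := div_pos hδ hr
    by_cases hcase : ∃ l ∈ Set.Ioc (0:ℝ) a, φ (xfam l) ≤ r
    · obtain ⟨l, hl, hfeas⟩ := hcase
      refine ⟨xfam l, hfeas, ?_⟩
      have hmle : m ≤ G l := csInf_le ⟨-C, hlow⟩ ⟨l, hl.1, rfl⟩
      rw [hGval] at hmle
      have hψ : ψ (xfam l) = H l + l * φ (xfam l) := by
        have := hatt l hl.1; linarith
      have hlr : l * r ≤ δ := by
        have hla : l ≤ a := hl.2
        calc l * r ≤ a * r := by nlinarith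
        _ = δ := by rw [ha]; field_simp [hr.ne']
      nlinarith [mul_nonneg hl.1.le (hφ (xfam l))]
    · push_neg at hcase
      have hanti : StrictAntiOn G (Set.Ioc 0 a) := by
        apply strictAntiOn_of_deriv_neg (convex_Ioc 0 a)
        · intro x hx
          exact ((hGder x hx.1).continuousAt).continuousWithinAt
        · intro x hx
          rw [interior_Ioc] at hx
          rw [(hGder x hx.1).deriv]
          have := hcase x ⟨hx.1, hx.2.le⟩
          linarith
      set L : ℝ := max a ((G a + C) / r) with hL
      have haL : a ≤ L := le_max_left _ _
      have hLbig : ∀ l : ℝ, L ≤ l → G a ≤ G l := by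
        intro l hll
        have hl0 : 0 < l := lt_of_lt_of_le (lt_of_lt_of_le ha0 haL) hll
        have h2 : (G a + C) / r ≤ l := le_trans (le_max_right _ _) hll
        have h3 : G a + C ≤ l * r := by
          have := (div_le_iff₀ hr).1 h2; linarith
        have h4 : -C ≤ H l := (abs_le.1 (hbd l hl0)).1
        rw [hGval a] at h3
        rw [hGval a, hGval l]; linarith
      obtain ⟨l', hl'mem, hl'min⟩ := (isCompact_Icc (a := a) (b := L)).exists_isMinOn
        ⟨a, Set.left_mem_Icc.2 haL⟩
        (fun x hx => ((hGder x (lt_of_lt_of_le ha0 hx.1)).continuousAt).continuousWithinAt)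
      have hl'0 : 0 < l' := lt_of_lt_of_le ha0 hl'mem.1
      have hglobal : ∀ l : ℝ, 0 < l → G l' ≤ G l := by
        intro l hl0
        rcases le_or_gt l a with h | h
        · have hGa : G l' ≤ G a := hl'min (Set.left_mem_Icc.2 haL)
          rcases eq_or_lt_of_le h with rfl | h
          · exact hGa
          · have := hanti ⟨hl0, h.le⟩ (Set.right_mem_Ioc.2 ha0) h
            linarith
        · rcases le_or_gt l L with h2 | h2
          · exact hl'min ⟨h.le, h2⟩
          · have := hLbig l h2.le
            have hGa : G l' ≤ G a := hl'min (Set.left_mem_Icc.2 haL)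
            linarith
      have hmin : IsLocalMin G l' := by
        apply IsMinOn.isLocalMin (s := Set.Ioi 0)
        · intro y hy; exact hglobal y hy
        · exact Ioi_mem_nhds hl'0
      have hd0 : -(φ (xfam l')) + r = 0 := hmin.hasDerivAt_eq_zero (hGder l' hl'0)
      have hfeas : φ (xfam l') = r := by linarith
      refine ⟨xfam l', hfeas.le, ?_⟩
      have hψ : ψ (xfam l') = G l' := by
        have h := hatt l' hl'0
        rw [hfeas] at h
        rw [hGval]; linarith
      have hmle : m ≤ G l' := csInf_le ⟨-C, hlow⟩ ⟨l', hl'0, rfl⟩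
      linarith
  have hSne : S.Nonempty := by
    obtain ⟨x, hx1, _⟩ := key 1 one_pos
    exact ⟨ψ x, x, hx1, rfl⟩
  have hSbd : ∀ l : ℝ, 0 < l → ∀ y ∈ S, y ≤ G l := by
    rintro l hl y ⟨x, hx, rfl⟩
    have hx' : φ x ≤ r := hx
    have h1 := hdom l hl x
    have h2 : l * φ x ≤ l * r := mul_le_mul_of_nonneg_left hx' hl.le
    rw [hGval]; linarith
  have hSbdd : BddAbove S := ⟨G 1, fun y hy => hSbd 1 one_pos y hy⟩
  apply le_antisymm
  · refine le_csInf ⟨G 1, Set.mem_image_of_mem _ (Set.mem_Ioi.2 one_pos)⟩ ?_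
    rintro b ⟨l, hl, rfl⟩
    exact csSup_le hSne (hSbd l hl)
  · apply le_of_forall_pos_le_add
    intro δ hδ
    obtain ⟨x, hx1, hx2⟩ := key δ hδ
    have : ψ x ≤ sSup S := le_csSup hSbdd ⟨x, hx1, rfl⟩
    linarith
end

section
/- Let g : [0, ∞) → ℝ be a nondecreasing function which is differentiable at γ = 0 (from the right), with derivative g'(0). For r ≥ 0 define V(r) := inf_{γ > 0} ( g(γ) + r²/γ ). Then V is differentiable at r = 0 from the right with V'(0) = 2·√(g'(0)); that is, V(0) = g(0) and ( V(r) − V(0) ) / r → 2·√(g'(0)) as r → 0⁺. -/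
open Filter

/-- `V g r = inf_{γ > 0} ( g γ + r²/γ )`. -/
noncomputable def dualValue (g : ℝ → ℝ) (r : ℝ) : ℝ :=
  sInf ((fun γ : ℝ => g γ + r ^ 2 / γ) '' Set.Ioi 0)

set_option maxHeartbeats 2000000 in
/-- **Sensitivity lemma.** If `g : [0,∞) → ℝ` is nondecreasing and
differentiable at `0` from the right with derivative `l`, then
`V(r) := inf_{γ>0} ( g γ + r²/γ )` satisfies `V(0) = g(0)` and `V` is
right-differentiable at `0` with `V'(0) = 2·√(g'(0))`, i.e.
`(V r - V 0)/r → 2·√l` as `r → 0⁺`. -/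
theorem dualValue_right_deriv_at_zero
    (g : ℝ → ℝ) (hg : MonotoneOn g (Set.Ici 0))
    (l : ℝ) (hder : HasDerivWithinAt g l (Set.Ici 0) 0) :
    dualValue g 0 = g 0 ∧
    Tendsto (fun r : ℝ => (dualValue g r - dualValue g 0) / r)
      (nhdsWithin 0 (Set.Ioi 0)) (nhds (2 * Real.sqrt l)) := by
  -- lower bound for the defining set
  have hlb : ∀ r : ℝ, ∀ x ∈ (fun γ : ℝ => g γ + r ^ 2 / γ) '' Set.Ioi 0, g 0 ≤ x := by
    rintro r x ⟨γ, hγ, rfl⟩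
    have h1 : g 0 ≤ g γ := hg Set.self_mem_Ici (Set.mem_Ici.2 (le_of_lt hγ)) (le_of_lt hγ)
    have h2 : 0 ≤ r ^ 2 / γ := div_nonneg (sq_nonneg r) (le_of_lt hγ)
    simp only
    linarith
  have hbdd : ∀ r : ℝ, BddBelow ((fun γ : ℝ => g γ + r ^ 2 / γ) '' Set.Ioi 0) :=
    fun r => ⟨g 0, hlb r⟩
  have hne : ∀ r : ℝ, ((fun γ : ℝ => g γ + r ^ 2 / γ) '' Set.Ioi 0).Nonempty :=
    fun r => Set.Nonempty.image _ Set.nonempty_Ioi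
  have hVle : ∀ r γ : ℝ, 0 < γ → dualValue g r ≤ g γ + r ^ 2 / γ := by
    intro r γ hγ
    exact csInf_le (hbdd r) ⟨γ, hγ, rfl⟩
  have hVge : ∀ r : ℝ, g 0 ≤ dualValue g r := fun r => le_csInf (hne r) (hlb r)
  -- slope tendsto
  have hslope : Tendsto (fun γ : ℝ => (g γ - g 0) / γ) (nhdsWithin 0 (Set.Ioi 0)) (nhds l) := by
    have h := hasDerivWithinAt_iff_tendsto_slope.1 hder
    rw [Set.Ici_sdiff_left] at h
    refine h.congr fun γ => ?_
    simp [slope_def_field]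
  -- l ≥ 0
  have hl0 : 0 ≤ l := by
    refine ge_of_tendsto hslope ?_
    filter_upwards [self_mem_nhdsWithin] with γ hγ
    have : g 0 ≤ g γ := hg Set.self_mem_Ici (Set.mem_Ici.2 (le_of_lt hγ)) (le_of_lt hγ)
    exact div_nonneg (by linarith) (le_of_lt hγ)
  set L := Real.sqrt l with hLdef
  clear_value L
  have hL0 : 0 ≤ L := by rw [hLdef]; exact Real.sqrt_nonneg l
  have hL2 : L ^ 2 = l := by rw [hLdef]; exact Real.sq_sqrt hl0
  -- V(0) = g 0
  have hV0 : dualValue g 0 = g 0 := by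
    refine le_antisymm ?_ (hVge 0)
    refine le_of_forall_pos_le_add fun ε hε => ?_
    have hcont : Tendsto g (nhdsWithin 0 (Set.Ioi 0)) (nhds (g 0)) :=
      (hder.continuousWithinAt.mono (Set.Ioi_subset_Ici le_rfl))
    have hev : ∀ᶠ γ in nhdsWithin 0 (Set.Ioi 0), g γ < g 0 + ε :=
      hcont.eventually (eventually_lt_nhds (by linarith))
    obtain ⟨γ, hγlt, hγmem⟩ := (hev.and self_mem_nhdsWithin).exists
    have := hVle 0 γ hγmem
    have h0 : (0:ℝ) ^ 2 / γ = 0 := by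
      simp
    rw [h0] at this
    linarith
  refine ⟨hV0, ?_⟩
  rw [Metric.tendsto_nhdsWithin_nhds]
  intro ε hε
  -- upper bound data
  obtain ⟨c, hcdef⟩ : ∃ c : ℝ, c = (L + ε / 4)⁻¹ := ⟨_, rfl⟩
  have hLε : 0 < L + ε / 4 := by linarith
  have hc : 0 < c := by rw [hcdef]; exact inv_pos.2 hLε
  obtain ⟨d, hddef⟩ : ∃ d : ℝ, d = ε / 4 * (L + ε / 4) := ⟨_, rfl⟩
  have hd : 0 < d := by rw [hddef]; positivity
  have hcd : c * d = ε / 4 := by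
    rw [hcdef, hddef]
    field_simp
  have hcinv : 1 / c = L + ε / 4 := by
    rw [hcdef]; simp
  have hcl : c * l ≤ L := by
    rw [hcdef]
    rw [inv_mul_le_iff₀ hLε]
    nlinarith
  -- slope eventually < l + d : extract δ₁
  have hev1 : ∀ᶠ γ in nhdsWithin 0 (Set.Ioi 0), (g γ - g 0) / γ < l + d :=
    hslope.eventually (eventually_lt_nhds (by linarith))
  obtain ⟨δ₁, hδ₁, hball₁⟩ := Metric.mem_nhdsWithin_iff.1 hev1
  have hup : ∀ r : ℝ, 0 < r → r < δ₁ / c →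
      (dualValue g r - g 0) / r ≤ 2 * L + ε / 2 := by
    intro r hr hrδ
    have hcr : 0 < c * r := mul_pos hc hr
    have hmem : c * r ∈ Metric.ball (0:ℝ) δ₁ ∩ Set.Ioi 0 := by
      constructor
      · rw [Metric.mem_ball, Real.dist_eq, sub_zero, abs_of_pos hcr]
        calc c * r < c * (δ₁ / c) := by exact (mul_lt_mul_iff_right₀ hc).2 hrδ
        _ = δ₁ := by field_simp
      · exact hcr
    have hsl : (g (c * r) - g 0) / (c * r) < l + d := hball₁ hmem
    have hgcr : g (c * r) - g 0 < (l + d) * (c * r) := by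
      rwa [div_lt_iff₀ hcr] at hsl
    have hV : dualValue g r ≤ g (c * r) + r ^ 2 / (c * r) := hVle r (c * r) hcr
    have hdiv : r ^ 2 / (c * r) = r / c := by
      field_simp
    rw [hdiv] at hV
    have key : (dualValue g r - g 0) / r ≤ (l + d) * c + 1 / c := by
      rw [div_le_iff₀ hr]
      have : g (c * r) + r / c - g 0 ≤ ((l + d) * c + 1 / c) * r := by
        have hrc : r / c = (1 / c) * r := by field_simp
        nlinarith
      linarith
    have : (l + d) * c + 1 / c ≤ 2 * L + ε / 2 := by
      rw [hcinv]
      nlinarith [hcd, hcl]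
    linarith
  -- lower bound
  by_cases hLsmall : L ≤ ε / 4
  · -- trivial lower bound
    refine ⟨δ₁ / c, div_pos hδ₁ hc, ?_⟩
    intro r hr hrd
    rw [Set.mem_Ioi] at hr
    rw [Real.dist_eq, sub_zero, abs_of_pos hr] at hrd
    rw [Real.dist_eq]
    have h1 := hup r hr hrd
    have h2 : 0 ≤ (dualValue g r - g 0) / r :=
      div_nonneg (by linarith [hVge r]) hr.le
    rw [hV0]
    rw [abs_lt]
    constructor <;> nlinarith
  · push_neg at hLsmall
    obtain ⟨m, hmdef⟩ : ∃ m : ℝ, m = (L - ε / 4) ^ 2 := ⟨_, rfl⟩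
    have hsm : Real.sqrt m = L - ε / 4 := by rw [hmdef]; exact Real.sqrt_sq (by linarith)
    have hm0 : 0 < m := by rw [hmdef]; exact pow_pos (by linarith) 2
    have hml : m < l := by
      rw [hmdef, ← hL2]
      nlinarith
    have hev2 : ∀ᶠ γ in nhdsWithin 0 (Set.Ioi 0), m < (g γ - g 0) / γ :=
      hslope.eventually (eventually_gt_nhds hml)
    obtain ⟨δ₂, hδ₂, hball₂⟩ := Metric.mem_nhdsWithin_iff.1 hev2
    obtain ⟨γ₀, hγ₀def⟩ : ∃ x : ℝ, x = δ₂ / 2 := ⟨_, rfl⟩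
    have hγ₀ : 0 < γ₀ := by rw [hγ₀def]; positivity
    have hslopelow : ∀ γ : ℝ, 0 < γ → γ ≤ γ₀ → m * γ ≤ g γ - g 0 := by
      intro γ hγ hγle
      have hmem : γ ∈ Metric.ball (0:ℝ) δ₂ ∩ Set.Ioi 0 := by
        constructor
        · rw [Metric.mem_ball, Real.dist_eq, sub_zero, abs_of_pos hγ]
          rw [hγ₀def] at hγle; linarith
        · exact hγ
      have h := hball₂ hmem
      simp only [Set.mem_setOf_eq] at h
      rw [lt_div_iff₀ hγ] at h
      linarith
    -- for r small, V r - g 0 ≥ 2 r √m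
    obtain ⟨sm, hsmdef⟩ : ∃ x : ℝ, x = Real.sqrt m := ⟨_, rfl⟩
    have hsm0 : 0 < sm := by rw [hsmdef]; exact Real.sqrt_pos.2 hm0
    have hsm2 : sm ^ 2 = m := by rw [hsmdef]; exact Real.sq_sqrt hm0.le
    have hlow : ∀ r : ℝ, 0 < r → 2 * r * sm < m * γ₀ →
        g 0 + 2 * r * sm ≤ dualValue g r := by
      intro r hr hrγ₀
      refine le_csInf (hne r) ?_
      rintro x ⟨γ, hγ, rfl⟩
      show g 0 + 2 * r * sm ≤ g γ + r ^ 2 / γ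
      have hγ' : γ ≠ 0 := ne_of_gt hγ
      rcases le_or_gt γ γ₀ with hle | hgt
      · have h1 := hslopelow γ hγ hle
        have hamgm : 2 * r * sm ≤ m * γ + r ^ 2 / γ := by
          have key : m * γ + r ^ 2 / γ - 2 * r * sm = (sm * γ - r) ^ 2 / γ := by
            field_simp
            nlinarith [hsm2, sq_nonneg γ]
          nlinarith [div_nonneg (sq_nonneg (sm * γ - r)) hγ.le]
        linarith
      · have h1 : g γ₀ ≤ g γ := hg (Set.mem_Ici.2 hγ₀.le) (Set.mem_Ici.2 hγ.le) hgt.le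
        have h2 := hslopelow γ₀ hγ₀ le_rfl
        have h3 : 0 ≤ r ^ 2 / γ := div_nonneg (sq_nonneg r) hγ.le
        linarith
    -- combine
    refine ⟨min (δ₁ / c) (m * γ₀ / (2 * sm)), lt_min (div_pos hδ₁ hc) (by positivity), ?_⟩
    intro r hr hrd
    rw [Set.mem_Ioi] at hr
    rw [Real.dist_eq, sub_zero, abs_of_pos hr] at hrd
    have hrd1 : r < δ₁ / c := lt_of_lt_of_le hrd (min_le_left _ _)
    have hrd2 : r < m * γ₀ / (2 * sm) := lt_of_lt_of_le hrd (min_le_right _ _)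
    have hrγ₀ : 2 * r * sm < m * γ₀ := by
      rw [lt_div_iff₀ (by positivity)] at hrd2
      linarith
    have h1 := hup r hr hrd1
    have h2 := hlow r hr hrγ₀
    have h3 : 2 * L - ε / 2 ≤ (dualValue g r - dualValue g 0) / r := by
      rw [hV0, le_div_iff₀ hr]
      have : 2 * sm = 2 * L - ε / 2 := by rw [hsmdef, hsm]; ring
      nlinarith
    rw [Real.dist_eq, hV0] at *
    rw [abs_lt]
    constructor <;> nlinarith
end

section
/- Upper bound in the sensitivity lemma: let g : [0, ∞) → ℝ be a nondecreasing function which is differentiable at γ = 0 (from the right), with derivative l := g'(0), and for r ≥ 0 define V(r) := inf_{γ > 0} ( g(γ) + r²/γ ). Then V(0) = g(0), the quotient U(r) := ( V(r) − V(0) ) / r is nonnegative for every r > 0, and limsup_{r → 0⁺} U(r) ≤ 2·√l. -/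
open Filter

/-- **Upper bound in the sensitivity lemma.** If `g : [0,∞) → ℝ` is
nondecreasing and right-differentiable at `0` with derivative `l`, and
`V(r) := inf_{γ>0} ( g γ + r²/γ )`, then `V(0) = g(0)`, the quotient
`U(r) := (V r - V 0)/r` is nonnegative for `r > 0`, and
`limsup_{r→0⁺} U(r) ≤ 2·√l`. -/
theorem dualValue_limsup_le
    (g : ℝ → ℝ) (hg : MonotoneOn g (Set.Ici 0))
    (l : ℝ) (hder : HasDerivWithinAt g l (Set.Ici 0) 0) :
    dualValue g 0 = g 0 ∧
    (∀ r : ℝ, 0 < r → 0 ≤ (dualValue g r - dualValue g 0) / r) ∧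
    Filter.limsup (fun r : ℝ => (dualValue g r - dualValue g 0) / r)
      (nhdsWithin 0 (Set.Ioi 0)) ≤ 2 * Real.sqrt l := by
  have h0 : ∀ r γ : ℝ, 0 < γ → g 0 ≤ g γ + r ^ 2 / γ := by
    intro r γ hγ
    have h1 : g 0 ≤ g γ := hg Set.self_mem_Ici (le_of_lt hγ) hγ.le
    have h2 : 0 ≤ r ^ 2 / γ := div_nonneg (sq_nonneg r) hγ.le
    linarith
  have hbdd : ∀ r : ℝ, BddBelow ((fun γ : ℝ => g γ + r ^ 2 / γ) '' Set.Ioi 0) := by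
    intro r
    exact ⟨g 0, by rintro x ⟨γ, hγ, rfl⟩; exact h0 r γ hγ⟩
  have hne : ∀ r : ℝ, ((fun γ : ℝ => g γ + r ^ 2 / γ) '' Set.Ioi 0).Nonempty :=
    fun r => ⟨_, ⟨1, by norm_num, rfl⟩⟩
  have hVle : ∀ r γ : ℝ, 0 < γ → dualValue g r ≤ g γ + r ^ 2 / γ :=
    fun r γ hγ => csInf_le (hbdd r) ⟨γ, hγ, rfl⟩
  have hVge : ∀ r : ℝ, g 0 ≤ dualValue g r :=
    fun r => le_csInf (hne r) (by rintro x ⟨γ, hγ, rfl⟩; exact h0 r γ hγ)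
  have hV0 : dualValue g 0 = g 0 := by
    refine le_antisymm ?_ (hVge 0)
    have hc : ContinuousWithinAt g (Set.Ici 0) 0 := hder.continuousWithinAt
    have ht : Tendsto g (nhdsWithin 0 (Set.Ioi 0)) (nhds (g 0)) :=
      hc.mono_left (nhdsWithin_mono _ Set.Ioi_subset_Ici_self)
    refine ge_of_tendsto ht ?_
    filter_upwards [self_mem_nhdsWithin] with γ hγ
    have := hVle 0 γ hγ
    simpa using this
  have hU : ∀ r : ℝ, 0 < r → 0 ≤ (dualValue g r - dualValue g 0) / r := by
    intro r hr
    have := hVge r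
    rw [hV0]
    exact div_nonneg (by linarith) hr.le
  -- slope convergence
  have hslope : Tendsto (slope g 0) (nhdsWithin 0 (Set.Ioi 0)) (nhds l) := by
    have := hasDerivWithinAt_iff_tendsto_slope.mp hder
    have heq : Set.Ici (0:ℝ) \ {0} = Set.Ioi 0 := by
      ext x
      simp only [Set.mem_diff, Set.mem_Ici, Set.mem_singleton_iff, Set.mem_Ioi]
      constructor
      · rintro ⟨h1, h2⟩; exact lt_of_le_of_ne h1 (Ne.symm h2)
      · intro h; exact ⟨h.le, ne_of_gt h⟩
    rwa [heq] at this
  have hl : 0 ≤ l := by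
    refine ge_of_tendsto hslope ?_
    filter_upwards [self_mem_nhdsWithin] with γ hγ
    have h1 : g 0 ≤ g γ := hg Set.self_mem_Ici (le_of_lt (Set.mem_Ioi.mp hγ)) (Set.mem_Ioi.mp hγ).le
    rw [slope_def_field]
    apply div_nonneg (by linarith)
    simp only [Set.mem_Ioi] at hγ
    linarith
  refine ⟨hV0, hU, ?_⟩
  refine le_of_forall_gt_imp_ge_of_dense ?_
  intro c hc
  have hc0 : 0 < c := lt_of_le_of_lt (by positivity) hc
  have hlm : l < (c / 2) ^ 2 := by
    have hs : Real.sqrt l < c / 2 := by linarith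
    have := Real.sq_sqrt hl
    nlinarith [Real.sqrt_nonneg l]
  -- eventually slope < (c/2)^2
  have hev : ∀ᶠ γ in nhdsWithin (0:ℝ) (Set.Ioi 0), slope g 0 γ < (c / 2) ^ 2 :=
    hslope.eventually (Filter.Tendsto.eventually_lt_const hlm tendsto_id)
  -- map r ↦ 2r/c into the slope filter
  have hmap : Tendsto (fun r : ℝ => 2 * r / c) (nhdsWithin 0 (Set.Ioi 0))
      (nhdsWithin 0 (Set.Ioi 0)) := by
    apply tendsto_nhdsWithin_of_tendsto_nhds_of_eventually_within
    · have : Tendsto (fun r : ℝ => 2 * r / c) (nhds 0) (nhds (2 * 0 / c)) := by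
        exact (tendsto_id.const_mul 2).div_const c
      simpa using this.mono_left nhdsWithin_le_nhds
    · filter_upwards [self_mem_nhdsWithin] with r hr
      simp only [Set.mem_Ioi] at hr ⊢
      positivity
  have hev2 : ∀ᶠ r in nhdsWithin (0:ℝ) (Set.Ioi 0),
      (dualValue g r - dualValue g 0) / r ≤ c := by
    filter_upwards [hmap.eventually hev, self_mem_nhdsWithin] with r hsl hr
    simp only [Set.mem_Ioi] at hr
    set γ := 2 * r / c with hγdef
    have hγpos : 0 < γ := by positivity
    rw [slope_def_field] at hsl
    have hgb : g γ - g 0 < (c / 2) ^ 2 * γ := by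
      have := (div_lt_iff₀ (by simpa using hγpos)).mp (by simpa using hsl)
      linarith
    have hr2 : r ^ 2 / γ = r * c / 2 := by
      field_simp [hγdef]
      rw [hγdef, div_mul_cancel₀ _ hc0.ne']; ring
    have hVub : dualValue g r ≤ g γ + r ^ 2 / γ := hVle r γ hγpos
    have hkey : dualValue g r - g 0 ≤ c * r := by
      have : (c / 2) ^ 2 * γ = c * r / 2 := by
        field_simp [hγdef]; rw [hγdef, mul_comm, div_mul_cancel₀ _ hc0.ne']
      rw [hr2] at hVub
      nlinarith
    rw [hV0, div_le_iff₀ hr]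
    linarith [hkey]
  have hcob : IsCoboundedUnder (· ≤ ·) (nhdsWithin (0:ℝ) (Set.Ioi 0))
      (fun r : ℝ => (dualValue g r - dualValue g 0) / r) := by
    apply isCoboundedUnder_le_of_eventually_le _ (x := 0)
    filter_upwards [self_mem_nhdsWithin] with r hr
    exact hU r hr
  exact limsup_le_of_le hcob hev2
end

section
/- Convergence of near-optimizers in the sensitivity lemma: let g : [0, ∞) → ℝ be nondecreasing and differentiable at 0 from the right with l := g'(0) > 0. For r > 0 set U(r) := inf_{γ > 0} ( ( g(r·γ) − g(0) ) / r + 1/γ ), and let (γ_r)_{r>0} be a family of positive reals of r-optimizers, i.e. ( g(r·γ_r) − g(0) ) / r + 1/γ_r − r ≤ U(r) for every r > 0. Then 1/γ_r → √l as r → 0⁺. -/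
/-!
Write `x_r = 1/γ_r` and `a_r = slope g 0 (r γ_r)`, so that the quantity minimized at `γ_r` is
`a_r / x_r + x_r`. Testing the infimum with `γ = 1/√l` bounds it by a quantity `m_r → 2√l`.
Since `g` is monotone and increases strictly right after `0`, the bound `g (r γ_r) - g 0 ≤ r m_r`
forces `r γ_r → 0⁺`, whence `a_r → l`. Finally `(x - √a)² = x (a/x + x - 2√a)`, so an
almost-minimizer of `x ↦ a/x + x` is close to `√a`.
-/

open Filter

/-- `U g r = inf_{γ > 0} ( (g (r·γ) - g 0)/r + 1/γ )`. -/
noncomputable def diffQuotInf (g : ℝ → ℝ) (r : ℝ) : ℝ :=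
  sInf ((fun γ : ℝ => (g (r * γ) - g 0) / r + 1 / γ) '' Set.Ioi 0)

open Set Topology

theorem abs_sub_sqrt_le_sqrt_of_div_add_le {a x m : ℝ} (ha : 0 ≤ a) (hx : 0 < x)
    (h : a / x + x ≤ m) : |x - √a| ≤ √(m * (m - 2 * √a)) := by
  set b := √a
  have hb : b ^ 2 = a := Real.sq_sqrt ha
  have hq : (x - b) ^ 2 ≤ x * (m - 2 * b) := by
    have : a + x ^ 2 ≤ m * x := by
      have := mul_le_mul_of_nonneg_right h hx.le
      rwa [add_mul, div_mul_cancel₀ _ hx.ne', ← sq] at this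
    nlinarith
  have hm : 0 ≤ m - 2 * b := nonneg_of_mul_nonneg_right (le_trans (sq_nonneg _) hq) hx
  have hxm : x ≤ m := by linarith [div_nonneg ha hx.le]
  rw [Real.le_sqrt (abs_nonneg _) (by nlinarith), sq_abs]
  nlinarith

theorem tendsto_sqrt_of_div_add_le {α : Type*} {L : Filter α} {a x m : α → ℝ} {l : ℝ}
    (ha : Tendsto a L (𝓝 l)) (hm : Tendsto m L (𝓝 (2 * √l)))
    (ha₀ : ∀ᶠ i in L, 0 ≤ a i) (hx : ∀ᶠ i in L, 0 < x i)
    (h : ∀ᶠ i in L, a i / x i + x i ≤ m i) : Tendsto x L (𝓝 √l) := by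
  have hsqrt : Tendsto (fun i => √(a i)) L (𝓝 √l) := ha.sqrt
  have hgap : Tendsto (fun i => √(m i * (m i - 2 * √(a i)))) L (𝓝 0) := by
    simpa using (hm.mul (hm.sub (hsqrt.const_mul 2))).sqrt
  have hdiff : Tendsto (fun i => x i - √(a i)) L (𝓝 0) := by
    refine squeeze_zero_norm' ?_ hgap
    filter_upwards [ha₀, hx, h] with i hai hxi hi
    exact abs_sub_sqrt_le_sqrt_of_div_add_le hai hxi hi
  simpa using hdiff.add hsqrt

theorem diffQuotInf_le {g : ℝ → ℝ} (hg : MonotoneOn g (Ici 0)) {r γ : ℝ} (hr : 0 < r)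
    (hγ : 0 < γ) : diffQuotInf g r ≤ (g (r * γ) - g 0) / r + 1 / γ := by
  refine csInf_le ⟨0, ?_⟩ (mem_image_of_mem _ hγ)
  rintro _ ⟨c, hc, rfl⟩
  have hc : 0 < c := hc
  have : g 0 ≤ g (r * c) := hg (le_refl (0 : ℝ)) (mul_pos hr hc).le (mul_pos hr hc).le
  have := div_nonneg (sub_nonneg.2 this) hr.le
  positivity

theorem diffQuot_eq_slope_mul (g : ℝ → ℝ) (r γ : ℝ) :
    (g (r * γ) - g 0) / r = slope g 0 (r * γ) * γ := by
  rcases eq_or_ne r 0 with rfl | hr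
  · simp
  rcases eq_or_ne γ 0 with rfl | hγ
  · simp
  rw [slope_def_field]
  field_simp
  ring

theorem tendsto_diffQuot {g : ℝ → ℝ} {l c : ℝ} (hslope : Tendsto (slope g 0) (𝓝[>] 0) (𝓝 l))
    (hc : 0 < c) : Tendsto (fun r => (g (r * c) - g 0) / r) (𝓝[>] 0) (𝓝 (l * c)) := by
  have hrc : Tendsto (fun r : ℝ => r * c) (𝓝[>] 0) (𝓝[>] 0) :=
    tendsto_nhdsWithin_iff.2 ⟨((continuous_mul_const c).tendsto' 0 0 (zero_mul c)).mono_left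
      nhdsWithin_le_nhds, eventually_mem_nhdsWithin.mono fun r hr => mul_pos hr hc⟩
  simpa only [diffQuot_eq_slope_mul, Function.comp_apply] using (hslope.comp hrc).mul_const c

theorem eventually_lt_of_tendsto_slope_pos {g : ℝ → ℝ} {a l : ℝ}
    (hslope : Tendsto (slope g a) (𝓝[>] a) (𝓝 l)) (hl : 0 < l) :
    ∀ᶠ t in 𝓝[>] a, g a < g t := by
  filter_upwards [hslope.eventually (lt_mem_nhds hl), self_mem_nhdsWithin] with t ht hat
  exact (slope_pos_iff_of_le (le_of_lt hat)).1 ht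

theorem MonotoneOn.tendsto_nhdsGT_zero_of_sub_le {α : Type*} {L : Filter α} {g : ℝ → ℝ}
    (hg : MonotoneOn g (Ici 0)) (hg₀ : ∀ᶠ t in 𝓝[>] 0, g 0 < g t) {u b : α → ℝ}
    (hu : ∀ᶠ i in L, 0 < u i) (hb : Tendsto b L (𝓝 0))
    (h : ∀ᶠ i in L, g (u i) - g 0 ≤ b i) : Tendsto u L (𝓝[>] 0) := by
  refine tendsto_nhdsWithin_iff.2 ⟨tendsto_order.2 ⟨fun c hc => ?_, fun ε hε => ?_⟩, hu⟩
  · exact hu.mono fun i hi => hc.trans hi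
  obtain ⟨t, hgt, htε⟩ := (hg₀.and (Ioo_mem_nhdsGT hε)).exists
  have ht : 0 < t := htε.1
  filter_upwards [hu, h, hb.eventually (gt_mem_nhds (sub_pos.2 hgt))] with i hui hi hbi
  have hut : u i < t := lt_of_not_ge fun hti => by linarith [hg ht.le hui.le hti]
  exact hut.trans htε.2

/-- **Convergence of near-optimizers in the sensitivity lemma.** Let `g` be
nondecreasing on `[0,∞)` and right-differentiable at `0` with derivative
`l > 0`.  If `(γ r)_{r>0}` is a family of positive reals such that each `γ r`
is an `r`-optimizer for `U(r) := inf_{γ>0} ( (g (r·γ) - g 0)/r + 1/γ )`, i.e.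
`(g (r·γ r) - g 0)/r + 1/(γ r) - r ≤ U(r)`, then `1/(γ r) → √l` as `r → 0⁺`. -/
theorem near_optimizers_tendsto
    (g : ℝ → ℝ) (hg : MonotoneOn g (Set.Ici 0))
    (l : ℝ) (hl : 0 < l) (hder : HasDerivWithinAt g l (Set.Ici 0) 0)
    (γ : ℝ → ℝ) (hγpos : ∀ r : ℝ, 0 < r → 0 < γ r)
    (hopt : ∀ r : ℝ, 0 < r →
      (g (r * γ r) - g 0) / r + 1 / γ r - r ≤ diffQuotInf g r) :
    Tendsto (fun r : ℝ => 1 / γ r) (nhdsWithin 0 (Set.Ioi 0))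
      (nhds (Real.sqrt l)) := by
  have hs : 0 < √l := Real.sqrt_pos.2 hl
  have hslope : Tendsto (slope g 0) (𝓝[>] 0) (𝓝 l) :=
    (hasDerivWithinAt_iff_tendsto_slope' (lt_irrefl 0)).1 hder.Ioi_of_Ici
  set m : ℝ → ℝ := fun r => (g (r * (1 / √l)) - g 0) / r + 1 / (1 / √l) + r
  have hm : Tendsto m (𝓝[>] 0) (𝓝 (2 * √l)) := by
    have hlim : l * (1 / √l) + 1 / (1 / √l) + 0 = 2 * √l := by
      rw [one_div_one_div, add_zero, mul_one_div, Real.div_sqrt, two_mul]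
    rw [← hlim]
    exact ((tendsto_diffQuot hslope (one_div_pos.2 hs)).add_const _).add
      (tendsto_nhdsWithin_of_tendsto_nhds tendsto_id)
  have hle : ∀ r > 0, (g (r * γ r) - g 0) / r + 1 / γ r ≤ m r := fun r hr => by
    simp only [m]
    linarith [hopt r hr, diffQuotInf_le hg hr (one_div_pos.2 hs)]
  have hrγ : Tendsto (fun r => r * γ r) (𝓝[>] 0) (𝓝[>] 0) := by
    have hrm : Tendsto (fun r => r * m r) (𝓝[>] 0) (𝓝 0) := by
      simpa using (tendsto_nhdsWithin_of_tendsto_nhds tendsto_id).mul hm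
    refine hg.tendsto_nhdsGT_zero_of_sub_le (eventually_lt_of_tendsto_slope_pos hslope hl) ?_
      hrm ?_ <;> filter_upwards [self_mem_nhdsWithin] with r hr
    · exact mul_pos hr (hγpos r hr)
    · rw [← div_le_iff₀' hr]
      linarith [hle r hr, one_div_pos.2 (hγpos r hr)]
  refine tendsto_sqrt_of_div_add_le (hslope.comp hrγ) hm ?_ ?_ ?_ <;>
    filter_upwards [self_mem_nhdsWithin] with r hr
  · exact hg.slope_nonneg (le_refl (0 : ℝ)) (mul_pos hr (hγpos r hr)).le
  · exact one_div_pos.2 (hγpos r hr)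
  · rw [Function.comp_apply, div_div_eq_mul_div, div_one, ← diffQuot_eq_slope_mul]
    exact hle r hr
end
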